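/- The one-dimensional de Rham diagram commutes: for every continuously differentiable function f on [−1,1], the derivative of the interpolant equals the histopolant of the derivative, i.e. (I^N f)' = p²(f'); explicitly, (I^N f)' = ∑_{i=1}^N (f(ξ_i) − f(ξ_{i−1})) h_i. -/

import Mathlib

/-! The Lagrange basis reproduces constants, so `∑ lⱼ = 1` and hence `∑ lⱼ' = 0`.
Summation by parts then turns `(I^N f)' = ∑ f(ξⱼ) lⱼ'` into `∑ (f(ξᵢ) - f(ξᵢ₋₁)) hᵢ`,
and by the fundamental theorem of calculus each difference `f(ξᵢ) - f(ξᵢ₋₁)`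
is the integral of `f'` over `[ξᵢ₋₁, ξᵢ]`. -/

open Polynomial MeasureTheory

theorem Polynomial.sum_eq_one_of_eval_eq_ite {R ι : Type*} [CommRing R] [IsDomain R] [Fintype ι]
    [Nonempty ι] [DecidableEq ι] {v : ι → R} (hv : Function.Injective v) {l : ι → R[X]}
    (hdeg : ∀ i, (l i).natDegree < Fintype.card ι)
    (heval : ∀ i j, (l i).eval (v j) = if i = j then 1 else 0) :
    ∑ i, l i = 1 := by
  refine eq_of_natDegree_lt_card_of_eval_eq _ _ hv (fun j ↦ ?_) ?_
  · simp [eval_finsetSum, heval]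
  · have hsum : (∑ i, l i).natDegree ≤ Fintype.card ι - 1 :=
      natDegree_sum_le_of_forall_le _ _ fun i _ ↦ Nat.le_sub_one_of_lt (hdeg i)
    have := Fintype.card_pos (α := ι)
    simp only [natDegree_one, zero_le, sup_of_le_left]
    omega

theorem Fin.sum_smul_by_parts {R M : Type*} [Ring R] [AddCommGroup M] [Module R M] {n : ℕ}
    (c : Fin (n + 1) → R) (v : Fin (n + 1) → M) :
    ∑ j, c j • v j = c (Fin.last n) • ∑ j, v j
      - ∑ i : Fin n, (c i.succ - c i.castSucc) • ∑ j : Fin (n + 1),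
          if (j : ℕ) < (i : ℕ) + 1 then v j else 0 := by
  induction n with
  | zero => simp
  | succ n ih =>
    rw [Fin.sum_univ_castSucc, ih, Fin.sum_univ_castSucc (fun i : Fin (n + 1) ↦ _ • _)]
    simp only [sum_univ_castSucc, smul_add, castSucc_succ, Order.lt_add_one_iff, val_castSucc,
      val_fin_le, val_last, not_le.mpr (Fin.is_lt _), not_lt.mpr (Fin.is_lt _).le, ↓reduceIte,
      add_zero, sub_smul, Finset.sum_sub_distrib, Order.add_one_le_iff, succ_last, is_le',
      le_refl, lt_self_iff_false]
    abel

/-- `edgePolynomial l i` is `h_{i+1}`: the edges are indexed from `0` so that `i` runs over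
`Fin n`. -/
noncomputable def Polynomial.edgePolynomial {R : Type*} [CommRing R] {n : ℕ}
    (l : Fin (n + 1) → R[X]) (i : Fin n) : R[X] :=
  -∑ j : Fin (n + 1), if (j : ℕ) < (i : ℕ) + 1 then derivative (l j) else 0

theorem Polynomial.derivative_sum_smul_eq_sum_sub_smul_edgePolynomial {R : Type*} [CommRing R]
    {n : ℕ} {l : Fin (n + 1) → R[X]} (hl : ∑ j, l j = 1) (c : Fin (n + 1) → R) :
    derivative (∑ j, c j • l j)
      = ∑ i : Fin n, (c i.succ - c i.castSucc) • edgePolynomial l i := by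
  have hl' : ∑ j, derivative (l j) = 0 := by rw [← derivative_sum, hl, derivative_one]
  calc derivative (∑ j, c j • l j) = ∑ j, c j • derivative (l j) := by
        simp only [derivative_sum, derivative_smul]
    _ = _ := by
        simp only [Fin.sum_smul_by_parts, hl', smul_zero, zero_sub, edgePolynomial, smul_neg,
          Finset.sum_neg_distrib]

theorem intervalIntegral.integral_derivWithin_Icc_of_le {E : Type*} [NormedAddCommGroup E]
    [NormedSpace ℝ E] [CompleteSpace E] {f : ℝ → E} {a b x y : ℝ}
    (hf : ContDiffOn ℝ 1 f (Set.Icc a b)) (hax : a ≤ x) (hxy : x ≤ y) (hyb : y ≤ b) :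
    ∫ s in x..y, derivWithin f (Set.Icc a b) s = f y - f x := by
  rw [← integral_deriv_of_contDiffOn_Icc (hf.mono (Set.Icc_subset_Icc hax hyb)) hxy,
    integral_of_le hxy, integral_of_le hxy, ← restrict_Ioo_eq_restrict_Ioc]
  refine MeasureTheory.integral_congr_ae ?_
  filter_upwards [self_mem_ae_restrict measurableSet_Ioo] with s hs
  exact derivWithin_of_mem_nhds (Icc_mem_nhds (hax.trans_lt hs.1) (hs.2.trans_le hyb))

theorem interpolation_derivative_eq_histopolation_of_derivative
    (N : ℕ) (ξ : Fin (N + 1) → ℝ)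
    (hmono : StrictMono ξ) (hfirst : ξ 0 = -1) (hlast : ξ (Fin.last N) = 1)
    (l : Fin (N + 1) → Polynomial ℝ)
    (hdeg : ∀ i, (l i).natDegree ≤ N)
    (hlag : ∀ i j, (l i).eval (ξ j) = if i = j then 1 else 0)
    (h : Fin N → Polynomial ℝ)
    (hdef : ∀ i : Fin N,
      h i = -∑ j : Fin (N + 1), if (j : ℕ) < (i : ℕ) + 1 then derivative (l j) else 0)
    (f : ℝ → ℝ) (hf : ContDiffOn ℝ 1 f (Set.Icc (-1 : ℝ) 1)) :
    derivative (∑ i : Fin (N + 1), f (ξ i) • l i)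
      = ∑ i : Fin N,
          (∫ s in (ξ i.castSucc)..(ξ i.succ), derivWithin f (Set.Icc (-1 : ℝ) 1) s) • h i ∧
    derivative (∑ i : Fin (N + 1), f (ξ i) • l i)
      = ∑ i : Fin N, (f (ξ i.succ) - f (ξ i.castSucc)) • h i := by
  have hpartition : ∑ i, l i = 1 :=
    sum_eq_one_of_eval_eq_ite hmono.injective
      (fun i ↦ by simpa [Nat.lt_succ_iff] using hdeg i) hlag
  have hdiff : derivative (∑ i, f (ξ i) • l i)
      = ∑ i : Fin N, (f (ξ i.succ) - f (ξ i.castSucc)) • h i := by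
    rw [funext hdef]
    exact derivative_sum_smul_eq_sum_sub_smul_edgePolynomial hpartition _
  refine ⟨hdiff.trans (Finset.sum_congr rfl fun i _ ↦ ?_), hdiff⟩
  rw [intervalIntegral.integral_derivWithin_Icc_of_le hf
    (hfirst ▸ hmono.monotone (Fin.zero_le _)) (hmono Fin.castSucc_lt_succ).le
    (hlast ▸ hmono.monotone (Fin.le_last _))]
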